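/- arXiv:0707.0871 — 5 statements merged into one kernel-verified Lean document; each statement's English description precedes it below -/
import Mathlib

section
/- Let x₀ ∈ ℝ^N with x₀,k ≥ 0 for all k. Then the Euclidean projection of −x₀ onto S — that is, the unique x* ∈ S minimizing ‖x − (−x₀)‖₂ over x ∈ S — is given componentwise by x*_k = [μ − x₀,k]₀^{p^max(k)} for all k ∈ {1,…,N}, for some μ > 0 chosen so that (1/N)·Σ_{k=1}^N x*_k = 1. -/
/-!
The clamped vector `x_k = [μ - x₀,k]₀^{pmax k}` satisfies the KKT conditions of `min ‖x + x₀‖²`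
over `S`: `(y_k - x_k)(x_k + x₀,k - μ) ≥ 0` for every admissible `y`, and the
term `μ (Σ y_k - Σ x_k)` vanishes on `S`. Summing gives the variational inequality
`⟪y - x, x + x₀⟫ ≥ 0`, hence `‖y + x₀‖² ≥ ‖x + x₀‖² + ‖y - x‖²`, which yields both optimality and
uniqueness. The level `μ` exists by the intermediate value theorem, since `μ ↦ Σ_k x_k` is
continuous, vanishes at `μ = 0` (as `x₀ ≥ 0`) and reaches `Σ_k pmax k > N` for large `μ`.
-/

open Finset

noncomputable section

/-- Squared Euclidean distance between two vectors of `ℝ^N`. -/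
def dsq {N : ℕ} (x y : Fin N → ℝ) : ℝ := ∑ k, (x k - y k) ^ 2

/-- The admissible set `S` with per-component caps `pmax`. -/
def stratSet {N : ℕ} (pmax : Fin N → ℝ) : Set (Fin N → ℝ) :=
  {p | (1 / (N : ℝ)) * ∑ k, p k = 1 ∧ ∀ k, 0 ≤ p k ∧ p k ≤ pmax k}

/-- `x` is a Euclidean projection of `z` onto `S` (a minimizer of the Euclidean distance). -/
def IsProjOn {N : ℕ} (S : Set (Fin N → ℝ)) (z x : Fin N → ℝ) : Prop :=
  x ∈ S ∧ ∀ y ∈ S, dsq x z ≤ dsq y z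

def waterFilling {N : ℕ} (pmax x0 : Fin N → ℝ) (μ : ℝ) : Fin N → ℝ :=
  fun k => min (pmax k) (max 0 (μ - x0 k))

section Distance

variable {N : ℕ}

lemma dsq_nonneg (x y : Fin N → ℝ) : 0 ≤ dsq x y :=
  sum_nonneg fun _ _ => sq_nonneg _

lemma eq_of_dsq_eq_zero {x y : Fin N → ℝ} (h : dsq x y = 0) : x = y := by
  funext k
  have hk := (sum_eq_zero_iff_of_nonneg fun i _ => sq_nonneg (x i - y i)).mp h k (mem_univ k)
  exact sub_eq_zero.mp (pow_eq_zero_iff two_ne_zero |>.mp hk)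

lemma dsq_eq_dsq_add_dsq_add (x y z : Fin N → ℝ) :
    dsq y z = dsq x z + dsq y x + 2 * ∑ k, (y k - x k) * (x k - z k) := by
  simp only [dsq, mul_sum, ← sum_add_distrib]
  exact sum_congr rfl fun k _ => by ring

variable {S : Set (Fin N → ℝ)} {z x : Fin N → ℝ}

lemma IsProjOn.of_dsq_add_le (hx : x ∈ S) (h : ∀ y ∈ S, dsq x z + dsq y x ≤ dsq y z) :
    IsProjOn S z x :=
  ⟨hx, fun y hy => by linarith [h y hy, dsq_nonneg y x]⟩

lemma IsProjOn.eq_of_dsq_add_le (hx : x ∈ S) (h : ∀ y ∈ S, dsq x z + dsq y x ≤ dsq y z)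
    {y : Fin N → ℝ} (hy : IsProjOn S z y) : y = x :=
  eq_of_dsq_eq_zero <| le_antisymm
    (by linarith [h y hy.1, hy.2 x hx]) (dsq_nonneg y x)

end Distance

/-- Variational characterisation of the projection of `t` onto `[0, b]`. -/
lemma mul_sub_min_max_nonneg {b y t : ℝ} (hy0 : 0 ≤ y) (hyb : y ≤ b) :
    0 ≤ (y - min b (max 0 t)) * (min b (max 0 t) - t) := by
  rcases le_total t 0 with ht | ht
  · rw [max_eq_left ht, min_eq_right (hy0.trans hyb)]
    nlinarith
  rcases le_total b t with hbt | hbt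
  · rw [max_eq_right ht, min_eq_left hbt]
    nlinarith
  · rw [max_eq_right ht, min_eq_right hbt]
    simp

section WaterFilling

variable {N : ℕ} {pmax x0 : Fin N → ℝ}

lemma sum_eq_sum_of_mem_stratSet {x y : Fin N → ℝ} (hx : x ∈ stratSet pmax)
    (hy : y ∈ stratSet pmax) : ∑ k, y k = ∑ k, x k :=
  mul_left_cancel₀ (left_ne_zero_of_mul_eq_one hx.1) (hy.1.trans hx.1.symm)

lemma dsq_waterFilling_add_le {μ : ℝ} (hx : waterFilling pmax x0 μ ∈ stratSet pmax)
    {y : Fin N → ℝ} (hy : y ∈ stratSet pmax) :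
    dsq (waterFilling pmax x0 μ) (fun k => -x0 k) + dsq y (waterFilling pmax x0 μ)
      ≤ dsq y (fun k => -x0 k) := by
  set x := waterFilling pmax x0 μ
  have hinner : 0 ≤ ∑ k, (y k - x k) * (x k - -x0 k) :=
    calc 0 ≤ ∑ k, (y k - x k) * (x k - (μ - x0 k)) :=
          sum_nonneg fun k _ => mul_sub_min_max_nonneg (hy.2 k).1 (hy.2 k).2
      _ = ∑ k, (y k - x k) * (x k - -x0 k) - μ * (∑ k, y k - ∑ k, x k) := by
          simp only [mul_sub, ← sum_sub_distrib, mul_sum]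
          exact sum_congr rfl fun k _ => by ring
      _ = ∑ k, (y k - x k) * (x k - -x0 k) := by
          rw [sum_eq_sum_of_mem_stratSet hx hy]; ring
  linarith [dsq_eq_dsq_add_dsq_add x y (fun k => -x0 k)]

lemma continuous_sum_waterFilling : Continuous fun μ => ∑ k, waterFilling pmax x0 μ k :=
  continuous_finsetSum _ fun _ _ => by unfold waterFilling; fun_prop

lemma exists_pos_sum_waterFilling_eq (hpmax : ∀ k, 0 ≤ pmax k) (hx0 : ∀ k, 0 ≤ x0 k) {c : ℝ}
    (hc0 : 0 < c) (hc : c ≤ ∑ k, pmax k) :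
    ∃ μ, 0 < μ ∧ ∑ k, waterFilling pmax x0 μ k = c := by
  set f := fun μ => ∑ k, waterFilling pmax x0 μ k
  have hf0 : f 0 = 0 := sum_eq_zero fun k _ => by
    simp only [waterFilling, zero_sub, max_eq_left (neg_nonpos.mpr (hx0 k)), min_eq_right (hpmax k)]
  set M := ∑ k, (pmax k + x0 k)
  have hterm : ∀ k, 0 ≤ pmax k + x0 k := fun k => add_nonneg (hpmax k) (hx0 k)
  have hfM : f M = ∑ k, pmax k := sum_congr rfl fun k _ => by
    have hk : pmax k + x0 k ≤ M := single_le_sum (fun j _ => hterm j) (mem_univ k)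
    simp only [waterFilling, max_eq_right (by linarith [hpmax k] : (0 : ℝ) ≤ M - x0 k),
      min_eq_left (by linarith : pmax k ≤ M - x0 k)]
  obtain ⟨μ, hμ, hfμ⟩ := intermediate_value_Icc (sum_nonneg fun k _ => hterm k)
    continuous_sum_waterFilling.continuousOn (show c ∈ Set.Icc (f 0) (f M) by
      rw [hf0, hfM]; exact ⟨hc0.le, hc⟩)
  refine ⟨μ, hμ.1.lt_of_ne ?_, hfμ⟩
  rintro rfl
  exact hc0.ne' (hfμ.symm.trans hf0)

end WaterFilling

theorem statement0_general {N : ℕ} (pmax : Fin N → ℝ)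
    (hpmax : ∀ k, 0 ≤ pmax k) (hcap : 1 < (1 / (N : ℝ)) * ∑ k, pmax k)
    (x0 : Fin N → ℝ) (hx0 : ∀ k, 0 ≤ x0 k) :
    ∃ μ : ℝ, 0 < μ ∧
      (1 / (N : ℝ)) * ∑ k, min (pmax k) (max 0 (μ - x0 k)) = 1 ∧
      IsProjOn (stratSet pmax) (fun k => -x0 k)
        (fun k => min (pmax k) (max 0 (μ - x0 k))) ∧
      ∀ y, IsProjOn (stratSet pmax) (fun k => -x0 k) y →
        y = fun k => min (pmax k) (max 0 (μ - x0 k)) := by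
  have hN : (0 : ℝ) < N := by
    rcases (Nat.cast_nonneg N : (0 : ℝ) ≤ N).lt_or_eq with h | h
    · exact h
    · rw [← h] at hcap; norm_num at hcap
  have hNcap : (N : ℝ) < ∑ k, pmax k := by
    rwa [one_div, inv_mul_eq_div, lt_div_iff₀ hN, one_mul] at hcap
  obtain ⟨μ, hμ, hsum⟩ := exists_pos_sum_waterFilling_eq hpmax hx0 hN hNcap.le
  have hmem : waterFilling pmax x0 μ ∈ stratSet pmax :=
    ⟨by rw [hsum]; field_simp,
      fun k => ⟨le_min (hpmax k) (le_max_left _ _), min_le_left _ _⟩⟩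
  have hgap := fun y => dsq_waterFilling_add_le (y := y) hmem
  exact ⟨μ, hμ, hmem.1, IsProjOn.of_dsq_add_le hmem hgap,
    fun y hy => IsProjOn.eq_of_dsq_add_le hmem hgap hy⟩

/-- The Euclidean projection of `-x₀` onto the simplex `S` is the
componentwise clamp `[μ - x₀ₖ]₀^{pmax k}` for some `μ > 0` chosen so that the power
constraint holds with equality. -/
theorem statement0 {N : ℕ} (hN : 1 ≤ N) (pmax : Fin N → ℝ)
    (hpmax : ∀ k, 0 ≤ pmax k) (hcap : 1 < (1 / (N : ℝ)) * ∑ k, pmax k)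
    (x0 : Fin N → ℝ) (hx0 : ∀ k, 0 ≤ x0 k) :
    ∃ μ : ℝ, 0 < μ ∧
      (1 / (N : ℝ)) * ∑ k, min (pmax k) (max 0 (μ - x0 k)) = 1 ∧
      IsProjOn (stratSet pmax) (fun k => -x0 k)
        (fun k => min (pmax k) (max 0 (μ - x0 k))) ∧
      ∀ y, IsProjOn (stratSet pmax) (fun k => -x0 k) y →
        y = fun k => min (pmax k) (max 0 (μ - x0 k)) :=
  statement0_general pmax hpmax hcap x0 hx0
end
end

section
/- Let σ_k² ≥ 0 and |H(k)|² > 0 for k ∈ {1,…,N}, set insr_k = σ_k²/|H(k)|², and let w ∈ ℝ^N with w_k > 0 for all k. Then the projection of −insr onto S with respect to the weighted Euclidean norm ‖x‖_{2,w} = (Σ_{k=1}^N w_k·x_k²)^{1/2} — that is, the unique x* ∈ S minimizing Σ_{k=1}^N w_k·(x_k + insr_k)² over x ∈ S — is given componentwise by x*_k = [μ/w_k − insr_k]₀^{p^max(k)} for all k, for some μ > 0 chosen so that (1/N)·Σ_{k=1}^N x*_k = 1. -/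
/-!
The claimed point is the KKT point of the weighted projection, with `μ` the multiplier of the
sum constraint. The total `μ ↦ ∑ₖ [μ/wₖ - insrₖ]₀^{pmax k}` is continuous, vanishes at `μ = 0`
and equals `∑ₖ pmax k > N` for large `μ`, so the intermediate value theorem gives `μ > 0` with
total `N`. For this `x`, every `y ∈ S` satisfies `μ (yₖ - xₖ) ≤ wₖ (xₖ + insrₖ)(yₖ - xₖ)`
componentwise (according as `xₖ` is `0`, interior or capped), and summing kills the left side,
so the expansion `‖y + insr‖²_w = ‖x + insr‖²_w + ‖y - x‖²_w + 2 ⟨x + insr, y - x⟩_w` gives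
optimality and uniqueness.
-/

open Finset

noncomputable section

section ClampedLevel

variable {ι : Type*} {p w c : ι → ℝ}

def clampedLevel (p w c : ι → ℝ) (μ : ℝ) : ι → ℝ :=
  fun k => min (p k) (max 0 (μ / w k - c k))

theorem clampedLevel_mem_Icc (μ : ℝ) {k : ι} (hp : 0 ≤ p k) :
    clampedLevel p w c μ k ∈ Set.Icc 0 (p k) :=
  ⟨le_min hp (le_max_left _ _), min_le_left _ _⟩

theorem continuous_sum_clampedLevel [Fintype ι] :
    Continuous fun μ => ∑ k, clampedLevel p w c μ k := by
  unfold clampedLevel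
  fun_prop

theorem clampedLevel_zero (hp : ∀ k, 0 ≤ p k) (hc : ∀ k, 0 ≤ c k) :
    clampedLevel p w c 0 = 0 := by
  funext k
  have : (0 : ℝ) / w k - c k ≤ 0 := by rw [zero_div]; linarith [hc k]
  simp only [clampedLevel, max_eq_left this, min_eq_right (hp k), Pi.zero_apply]

theorem clampedLevel_eq_cap {μ : ℝ} {k : ι} (hw : 0 < w k) (hμ : w k * (p k + c k) ≤ μ) :
    clampedLevel p w c μ k = p k := by
  have : p k ≤ μ / w k - c k := by
    rw [le_sub_iff_add_le, le_div_iff₀ hw]; linarith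
  exact min_eq_left (this.trans (le_max_right _ _))

theorem exists_sum_clampedLevel_eq [Fintype ι] (hp : ∀ k, 0 ≤ p k) (hw : ∀ k, 0 < w k)
    (hc : ∀ k, 0 ≤ c k) {T : ℝ} (hT : 0 < T) (hTp : T ≤ ∑ k, p k) :
    ∃ μ, 0 < μ ∧ ∑ k, clampedLevel p w c μ k = T := by
  have hterm : ∀ k, 0 ≤ w k * (p k + c k) := fun k =>
    mul_nonneg (hw k).le (add_nonneg (hp k) (hc k))
  set M := ∑ k, w k * (p k + c k)
  have hM : ∑ k, clampedLevel p w c M k = ∑ k, p k :=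
    Finset.sum_congr rfl fun k _ =>
      clampedLevel_eq_cap (hw k) (Finset.single_le_sum (fun j _ => hterm j) (Finset.mem_univ k))
  have h0 : ∑ k, clampedLevel p w c 0 k = 0 := by simp [clampedLevel_zero hp hc]
  obtain ⟨μ, hμM, hμ⟩ := intermediate_value_Icc (Finset.sum_nonneg fun k _ => hterm k)
    continuous_sum_clampedLevel.continuousOn
    (show T ∈ Set.Icc _ _ by rw [h0, hM]; exact ⟨hT.le, hTp⟩)
  refine ⟨μ, lt_of_le_of_ne hμM.1 ?_, hμ⟩
  rintro rfl
  exact hT.ne' (hμ.symm.trans h0)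

theorem clampedLevel_variational {μ : ℝ} {k : ι} {y : ι → ℝ} (hw : 0 < w k)
    (hy : y k ∈ Set.Icc 0 (p k)) :
    μ * (y k - clampedLevel p w c μ k) ≤
      w k * (clampedLevel p w c μ k + c k) * (y k - clampedLevel p w c μ k) := by
  obtain ⟨hy0, hyp⟩ := hy
  unfold clampedLevel
  rcases le_or_gt (μ / w k - c k) 0 with hlow | hpos
  · have hμ : μ ≤ w k * c k := by
      rw [sub_nonpos, div_le_iff₀ hw] at hlow; linarith
    rw [max_eq_left hlow, min_eq_right (hy0.trans hyp)]
    nlinarith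
  rcases le_or_gt (μ / w k - c k) (p k) with hmid | hcap
  · rw [max_eq_right hpos.le, min_eq_right hmid, sub_add_cancel, mul_div_cancel₀ _ hw.ne']
  · have hμ : w k * (p k + c k) < μ := by
      rw [lt_sub_iff_add_lt, lt_div_iff₀ hw] at hcap; linarith
    rw [max_eq_right hpos.le, min_eq_left hcap.le]
    nlinarith

end ClampedLevel

section WeightedSquares

variable {ι : Type*} [Fintype ι] {w : ι → ℝ}

theorem sum_weighted_sq_add_eq (w c x y : ι → ℝ) :
    ∑ k, w k * (y k + c k) ^ 2 =
      ∑ k, w k * (x k + c k) ^ 2 + ∑ k, w k * (y k - x k) ^ 2 +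
        2 * ∑ k, w k * (x k + c k) * (y k - x k) := by
  rw [Finset.mul_sum, ← Finset.sum_add_distrib, ← Finset.sum_add_distrib]
  exact Finset.sum_congr rfl fun k _ => by ring

theorem sum_weighted_sq_nonneg (hw : ∀ k, 0 < w k) (v : ι → ℝ) :
    0 ≤ ∑ k, w k * v k ^ 2 :=
  Finset.sum_nonneg fun k _ => mul_nonneg (hw k).le (sq_nonneg _)

theorem eq_of_sum_weighted_sq_sub_nonpos (hw : ∀ k, 0 < w k) {x y : ι → ℝ}
    (h : ∑ k, w k * (y k - x k) ^ 2 ≤ 0) : y = x := by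
  have hzero := (Finset.sum_eq_zero_iff_of_nonneg fun k _ =>
    mul_nonneg (hw k).le (sq_nonneg (y k - x k))).mp (le_antisymm h (sum_weighted_sq_nonneg hw _))
  funext k
  have := hzero k (Finset.mem_univ k)
  rw [mul_eq_zero, or_iff_right (hw k).ne', sq_eq_zero_iff, sub_eq_zero] at this
  exact this

theorem sum_weighted_sq_clampedLevel_add_le {p c : ι → ℝ} (hw : ∀ k, 0 < w k) {μ : ℝ}
    {y : ι → ℝ} (hy : ∀ k, y k ∈ Set.Icc 0 (p k))
    (hsum : ∑ k, y k = ∑ k, clampedLevel p w c μ k) :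
    ∑ k, w k * (clampedLevel p w c μ k + c k) ^ 2 +
        ∑ k, w k * (y k - clampedLevel p w c μ k) ^ 2 ≤
      ∑ k, w k * (y k + c k) ^ 2 := by
  set x := clampedLevel p w c μ
  have hgrad : 0 ≤ ∑ k, w k * (x k + c k) * (y k - x k) :=
    calc (0 : ℝ) = ∑ k, μ * (y k - x k) := by
          rw [← Finset.mul_sum, Finset.sum_sub_distrib, hsum, sub_self, mul_zero]
      _ ≤ _ := Finset.sum_le_sum fun k _ => clampedLevel_variational (hw k) (hy k)
  rw [sum_weighted_sq_add_eq w c x y]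
  linarith

end WeightedSquares

theorem mem_stratSet_iff {N : ℕ} (hN : (N : ℝ) ≠ 0) {pmax y : Fin N → ℝ} :
    y ∈ stratSet pmax ↔ ∑ k, y k = N ∧ ∀ k, y k ∈ Set.Icc 0 (pmax k) := by
  change _ ∧ _ ↔ _
  rw [one_div, inv_mul_eq_one₀ hN, eq_comm]
  rfl

theorem statement1_general {N : ℕ} (pmax : Fin N → ℝ)
    (hpmax : ∀ k, 0 ≤ pmax k) (hcap : 1 < (1 / (N : ℝ)) * ∑ k, pmax k)
    (σsq Hsq : Fin N → ℝ) (hσ : ∀ k, 0 ≤ σsq k) (hHsq : ∀ k, 0 < Hsq k)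
    (w : Fin N → ℝ) (hw : ∀ k, 0 < w k) :
    ∃ μ : ℝ, 0 < μ ∧
      (1 / (N : ℝ)) * ∑ k, min (pmax k) (max 0 (μ / w k - σsq k / Hsq k)) = 1 ∧
      (fun k => min (pmax k) (max 0 (μ / w k - σsq k / Hsq k))) ∈ stratSet pmax ∧
      (∀ y ∈ stratSet pmax,
        ∑ k, w k * (min (pmax k) (max 0 (μ / w k - σsq k / Hsq k)) + σsq k / Hsq k) ^ 2 ≤
          ∑ k, w k * (y k + σsq k / Hsq k) ^ 2) ∧
      ∀ y ∈ stratSet pmax,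
        (∀ z ∈ stratSet pmax,
          ∑ k, w k * (y k + σsq k / Hsq k) ^ 2 ≤ ∑ k, w k * (z k + σsq k / Hsq k) ^ 2) →
        y = fun k => min (pmax k) (max 0 (μ / w k - σsq k / Hsq k)) := by
  have hN : (0 : ℝ) < N := by
    rcases (Nat.cast_nonneg (α := ℝ) N).eq_or_lt with h | h
    · rw [← h, div_zero, zero_mul] at hcap; linarith
    · exact h
  have hNp : (N : ℝ) < ∑ k, pmax k := by
    rwa [one_div, lt_inv_mul_iff₀ hN, mul_one] at hcap
  set c := fun k => σsq k / Hsq k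
  have hc : ∀ k, 0 ≤ c k := fun k => div_nonneg (hσ k) (hHsq k).le
  obtain ⟨μ, hμ, hsum⟩ := exists_sum_clampedLevel_eq hpmax hw hc hN hNp.le
  have hxS : clampedLevel pmax w c μ ∈ stratSet pmax :=
    (mem_stratSet_iff hN.ne').mpr ⟨hsum, fun k => clampedLevel_mem_Icc μ (hpmax k)⟩
  have hkey : ∀ y ∈ stratSet pmax, _ := fun y hy =>
    have hy' := (mem_stratSet_iff hN.ne').mp hy
    sum_weighted_sq_clampedLevel_add_le hw hy'.2 (hy'.1.trans hsum.symm)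
  refine ⟨μ, hμ, hxS.1, hxS, fun y hy => ?_, fun y hy hmin => ?_⟩
  · exact le_of_add_le_of_nonneg_left (hkey y hy) (sum_weighted_sq_nonneg hw _)
  · exact eq_of_sum_weighted_sq_sub_nonpos hw
      ((add_le_iff_nonpos_right _).mp ((hkey y hy).trans (hmin _ hxS)))

/-- The projection of `-insr` onto the simplex `S` with respect to the
`w`-weighted Euclidean norm is the componentwise clamp `[μ/wₖ - insrₖ]₀^{pmax k}` for
some `μ > 0` chosen so that the power constraint holds with equality. -/
theorem statement1 {N : ℕ} (hN : 1 ≤ N) (pmax : Fin N → ℝ)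
    (hpmax : ∀ k, 0 ≤ pmax k) (hcap : 1 < (1 / (N : ℝ)) * ∑ k, pmax k)
    (σsq Hsq : Fin N → ℝ) (hσ : ∀ k, 0 ≤ σsq k) (hHsq : ∀ k, 0 < Hsq k)
    (w : Fin N → ℝ) (hw : ∀ k, 0 < w k) :
    ∃ μ : ℝ, 0 < μ ∧
      (1 / (N : ℝ)) * ∑ k, min (pmax k) (max 0 (μ / w k - σsq k / Hsq k)) = 1 ∧
      (fun k => min (pmax k) (max 0 (μ / w k - σsq k / Hsq k))) ∈ stratSet pmax ∧
      (∀ y ∈ stratSet pmax,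
        ∑ k, w k * (min (pmax k) (max 0 (μ / w k - σsq k / Hsq k)) + σsq k / Hsq k) ^ 2 ≤
          ∑ k, w k * (y k + σsq k / Hsq k) ^ 2) ∧
      ∀ y ∈ stratSet pmax,
        (∀ z ∈ stratSet pmax,
          ∑ k, w k * (y k + σsq k / Hsq k) ^ 2 ≤ ∑ k, w k * (z k + σsq k / Hsq k) ^ 2) →
        y = fun k => min (pmax k) (max 0 (μ / w k - σsq k / Hsq k)) :=
  statement1_general pmax hpmax hcap σsq Hsq hσ hHsq w hw
end
end

section
/- For every user q and every p_{-q} ∈ 𝒫_{-q}, there exists μ_q > 0 such that for every k ∈ {1,…,N}: [WF_q(p_{-q})]_k = [μ_q − Γ_q·(1 + Σ_{r≠q} |H_rq(k)|²·p_r(k))/|H_qq(k)|²]₀^{p_q^max(k)}, and (1/N)·Σ_{k=1}^N [WF_q(p_{-q})]_k = 1. -/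
/-!
The projection `x` of `-w` onto `{x | (1/N) ∑ x = 1, 0 ≤ x ≤ c}` is characterised by an exchange
argument: moving a small mass `ε` from an active carrier `l` (`0 < x l`) to a carrier `j` with
slack (`x j < c j`) stays feasible and changes the squared distance by
`2ε((x j + w j) - (x l + w l)) + 2ε²`, so `x l + w l ≤ x j + w j`. The water level `μ` is the
least value of `x j + w j` over carriers with slack; such carriers exist because the caps exceed
the budget, and active carriers exist because the budget is positive. Clamping then reads off
`x`, and `μ ≥ x l + w l > 0` when `w ≥ 0`.
-/

open Finset
open scoped Classical

noncomputable section

/-- The interference-plus-noise-to-signal vector `insr_q(p_{-q})`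
(it only depends on the components `p r` for `r ≠ q`). -/
def insr {N Q : ℕ} (H : Fin Q → Fin Q → Fin N → ℝ) (Γ : Fin Q → ℝ)
    (q : Fin Q) (p : Fin Q → Fin N → ℝ) : Fin N → ℝ :=
  fun k => Γ q * (1 + ∑ r ∈ Finset.univ.erase q, H r q k * p r k) / H q q k

/-- `WF` is a waterfilling operator: whenever the other users' strategies are feasible,
`WF q p` is the Euclidean projection of `-insr_q(p_{-q})` onto user `q`'s strategy set. -/
def IsWF {N Q : ℕ} (H : Fin Q → Fin Q → Fin N → ℝ) (Γ : Fin Q → ℝ)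
    (pmax : Fin Q → Fin N → ℝ)
    (WF : Fin Q → (Fin Q → Fin N → ℝ) → Fin N → ℝ) : Prop :=
  ∀ q (p : Fin Q → Fin N → ℝ), (∀ r, r ≠ q → p r ∈ stratSet (pmax r)) →
    IsProjOn (stratSet (pmax q)) (fun k => -insr H Γ q p k) (WF q p)

/-- The rate `R_q(p)` of user `q`. -/
def rate {N Q : ℕ} (H : Fin Q → Fin Q → Fin N → ℝ) (Γ : Fin Q → ℝ)
    (q : Fin Q) (p : Fin Q → Fin N → ℝ) : ℝ :=
  (1 / (N : ℝ)) * ∑ k, Real.log (1 + H q q k * p q k /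
      (Γ q * (1 + ∑ r ∈ Finset.univ.erase q, H r q k * p r k)))

/-- `pstar` is a Nash equilibrium of the rate game `𝒢`. -/
def IsNE {N Q : ℕ} (H : Fin Q → Fin Q → Fin N → ℝ) (Γ : Fin Q → ℝ)
    (pmax : Fin Q → Fin N → ℝ) (pstar : Fin Q → Fin N → ℝ) : Prop :=
  (∀ q, pstar q ∈ stratSet (pmax q)) ∧
    ∀ q, ∀ x ∈ stratSet (pmax q),
      rate H Γ q (Function.update pstar q x) ≤ rate H Γ q pstar

/-- The set `D_q` of carriers that user `q` may use in some best response. -/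
def Dset {N Q : ℕ} (pmax : Fin Q → Fin N → ℝ)
    (WF : Fin Q → (Fin Q → Fin N → ℝ) → Fin N → ℝ) (q : Fin Q) : Set (Fin N) :=
  {k | ∃ p : Fin Q → Fin N → ℝ,
    (∀ r, r ≠ q → p r ∈ stratSet (pmax r)) ∧ WF q p k ≠ 0}

/-- `max_{k ∈ D_q ∩ D_r} |H_rq(k)|² / |H_qq(k)|²`, with the convention that it is `0`
when `D_q ∩ D_r = ∅` (via `Real.sSup_empty`). -/
def maxRatio {N Q : ℕ} (H : Fin Q → Fin Q → Fin N → ℝ) (pmax : Fin Q → Fin N → ℝ)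
    (WF : Fin Q → (Fin Q → Fin N → ℝ) → Fin N → ℝ) (q r : Fin Q) : ℝ :=
  sSup {x : ℝ | ∃ k : Fin N,
    (k ∈ Dset pmax WF q ∧ k ∈ Dset pmax WF r) ∧ x = H r q k / H q q k}

/-- The matrix `H^max`. -/
def Hmax {N Q : ℕ} (H : Fin Q → Fin Q → Fin N → ℝ) (Γ : Fin Q → ℝ)
    (pmax : Fin Q → Fin N → ℝ)
    (WF : Fin Q → (Fin Q → Fin N → ℝ) → Fin N → ℝ) : Matrix (Fin Q) (Fin Q) ℝ :=
  Matrix.of fun q r => if q = r then 0 else Γ q * maxRatio H pmax WF q r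

/-- The matrix `H(k)`. -/
def Hmat {N Q : ℕ} (H : Fin Q → Fin Q → Fin N → ℝ) (Γ : Fin Q → ℝ)
    (pmax : Fin Q → Fin N → ℝ)
    (WF : Fin Q → (Fin Q → Fin N → ℝ) → Fin N → ℝ) (k : Fin N) :
    Matrix (Fin Q) (Fin Q) ℝ :=
  Matrix.of fun q r =>
    if q ≠ r ∧ k ∈ Dset pmax WF q ∧ k ∈ Dset pmax WF r then
      Γ q * H r q k / H q q k
    else 0

/-- The spectral radius of a real square matrix: the maximum modulus of its complex
eigenvalues (the roots of its characteristic polynomial over `ℂ`). -/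
def specRad {n : ℕ} (A : Matrix (Fin n) (Fin n) ℝ) : ℝ :=
  sSup {x : ℝ | ∃ μ : ℂ,
    ((A.map (fun a => (a : ℂ))).charpoly).IsRoot μ ∧ x = ‖μ‖}

/-- The spectral norm `‖A‖₂ = ρ(AᵀA)^{1/2}` of a real square matrix. -/
def specNorm {n : ℕ} (A : Matrix (Fin n) (Fin n) ℝ) : ℝ :=
  Real.sqrt (specRad (A.transpose * A))

/-- Euclidean distance between strategy profiles, viewed as vectors of `ℝ^{QN}`. -/
def profDist {N Q : ℕ} (p p' : Fin Q → Fin N → ℝ) : ℝ :=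
  Real.sqrt (∑ q, ∑ k, (p q k - p' q k) ^ 2)

/-- The effective strategy set `𝒫_q^eff`. -/
def effSet {N Q : ℕ} (pmax : Fin Q → Fin N → ℝ)
    (WF : Fin Q → (Fin Q → Fin N → ℝ) → Fin N → ℝ) (q : Fin Q) : Set (Fin N → ℝ) :=
  {p | p ∈ stratSet (pmax q) ∧ ∀ k, k ∉ Dset pmax WF q → p k = 0}

/-- The gradient `∇_q R_q(p)` of the rate of user `q` with respect to its own powers. -/
def gradR {N Q : ℕ} (H : Fin Q → Fin Q → Fin N → ℝ) (Γ : Fin Q → ℝ)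
    (q : Fin Q) (p : Fin Q → Fin N → ℝ) : Fin N → ℝ :=
  fun k => (1 / (N : ℝ)) * H q q k /
    (Γ q * (1 + ∑ r ∈ Finset.univ.erase q, H r q k * p r k) + H q q k * p q k)

/-- `x` is a projection of `z` onto `S` with respect to the quadratic form of the
(symmetric positive definite) matrix `G`, i.e. a minimizer of `(x-z)ᵀ G (x-z)` over `S`. -/
def IsGProj {N : ℕ} (G : Matrix (Fin N) (Fin N) ℝ) (S : Set (Fin N → ℝ))
    (z x : Fin N → ℝ) : Prop :=
  x ∈ S ∧ ∀ y ∈ S,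
    dotProduct (fun i => x i - z i) (G.mulVec (fun i => x i - z i)) ≤
      dotProduct (fun i => y i - z i) (G.mulVec (fun i => y i - z i))

namespace stratSet

variable {N : ℕ} {c x : Fin N → ℝ}

theorem exists_lt_cap (hx : x ∈ stratSet c) (hc : 1 < (1 / (N : ℝ)) * ∑ k, c k) :
    ∃ j, x j < c j := by
  by_contra! hcap
  have hle : ∑ k, c k ≤ ∑ k, x k := sum_le_sum fun k _ => hcap k
  have := mul_le_mul_of_nonneg_left hle (by positivity : (0 : ℝ) ≤ 1 / N)
  linarith [hx.1]

theorem exists_pos (hx : x ∈ stratSet c) : ∃ l, 0 < x l := by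
  by_contra! hnonpos
  have hzero : ∑ k, x k = 0 := sum_eq_zero fun k _ => le_antisymm (hnonpos k) (hx.2 k).1
  have hsum := hx.1
  simp [hzero] at hsum

end stratSet

theorem dsq_add_single_sub_single {N : ℕ} (x z : Fin N → ℝ) {j l : Fin N} (hjl : j ≠ l)
    (ε : ℝ) :
    dsq (x + Pi.single j ε - Pi.single l ε) z =
      dsq x z + 2 * ε * ((x j - z j) - (x l - z l)) + 2 * ε ^ 2 := by
  have hdiff : dsq (x + Pi.single j ε - Pi.single l ε) z - dsq x z =
      2 * ε * ((x j - z j) - (x l - z l)) + 2 * ε ^ 2 := by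
    rw [dsq, dsq, ← sum_sub_distrib, sum_eq_add j l hjl]
    · simp only [Pi.sub_apply, Pi.add_apply, Pi.single_eq_same, Pi.single_eq_of_ne hjl,
        Pi.single_eq_of_ne hjl.symm]
      ring
    · intro k _ hk
      simp [hk.1, hk.2]
    · simp
    · simp
  linarith

theorem add_single_sub_single_mem_stratSet {N : ℕ} {c x : Fin N → ℝ} (hx : x ∈ stratSet c)
    {j l : Fin N} (hjl : j ≠ l) {ε : ℝ} (hε : 0 ≤ ε) (hj : ε ≤ c j - x j) (hl : ε ≤ x l) :
    x + Pi.single j ε - Pi.single l ε ∈ stratSet c := by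
  obtain ⟨hsum, hbox⟩ := hx
  refine ⟨by simpa [sum_add_distrib, sum_sub_distrib] using hsum, fun k => ?_⟩
  have := hbox k
  by_cases hkj : k = j
  · subst hkj
    simp only [Pi.sub_apply, Pi.add_apply, Pi.single_eq_same, Pi.single_eq_of_ne hjl]
    constructor <;> linarith
  by_cases hkl : k = l
  · subst hkl
    simp only [Pi.sub_apply, Pi.add_apply, Pi.single_eq_same, Pi.single_eq_of_ne hkj]
    constructor <;> linarith
  simpa [hkj, hkl] using this

theorem IsProjOn.add_le_add_of_lt_cap_of_pos {N : ℕ} {c w x : Fin N → ℝ}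
    (hx : IsProjOn (stratSet c) (fun k => -w k) x) {j l : Fin N} (hj : x j < c j)
    (hl : 0 < x l) : x l + w l ≤ x j + w j := by
  rcases eq_or_ne j l with rfl | hjl
  · rfl
  refine le_of_forall_pos_le_add fun ε hε => ?_
  set δ := min ε (min (c j - x j) (x l))
  have hδ : 0 < δ := lt_min hε (lt_min (by linarith) hl)
  have hδε : δ ≤ ε := min_le_left _ _
  have hmin := hx.2 _ (add_single_sub_single_mem_stratSet hx.1 hjl hδ.le
    ((min_le_right _ _).trans (min_le_left _ _)) ((min_le_right _ _).trans (min_le_right _ _)))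
  rw [dsq_add_single_sub_single _ _ hjl] at hmin
  simp only [sub_neg_eq_add] at hmin
  nlinarith

theorem eq_min_max_of_le_of_le {x b μ t : ℝ} (h0 : 0 ≤ x) (hb : x ≤ b)
    (hslack : x < b → μ ≤ x + t) (hactive : 0 < x → x + t ≤ μ) :
    x = min b (max 0 (μ - t)) := by
  rcases h0.lt_or_eq with hpos | rfl <;> rcases hb.lt_or_eq with hlt | rfl
  · have := hslack hlt; have := hactive hpos
    rw [max_eq_right (by linarith), min_eq_right (by linarith)]; linarith
  · have := hactive hpos
    rw [max_eq_right (by linarith), min_eq_left (by linarith)]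
  · have := hslack hlt
    rw [max_eq_left (by linarith), min_eq_right hlt.le]
  · simp

theorem IsProjOn.exists_waterfilling {N : ℕ} {c w x : Fin N → ℝ}
    (hx : IsProjOn (stratSet c) (fun k => -w k) x) (hc : 1 < (1 / (N : ℝ)) * ∑ k, c k)
    (hw : ∀ k, 0 ≤ w k) :
    ∃ μ : ℝ, 0 < μ ∧ ∀ k, x k = min (c k) (max 0 (μ - w k)) := by
  obtain ⟨j₀, hj₀⟩ := stratSet.exists_lt_cap hx.1 hc
  obtain ⟨l₀, hl₀⟩ := stratSet.exists_pos hx.1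
  set slack := univ.filter fun j => x j < c j
  have hslack : slack.Nonempty := ⟨j₀, by simpa [slack] using hj₀⟩
  set μ := slack.inf' hslack fun j => x j + w j
  have hle_μ : ∀ l, 0 < x l → x l + w l ≤ μ := fun l hl =>
    le_inf' _ _ fun j hj => hx.add_le_add_of_lt_cap_of_pos (by simpa [slack] using hj) hl
  refine ⟨μ, by linarith [hle_μ l₀ hl₀, hw l₀], fun k => ?_⟩
  exact eq_min_max_of_le_of_le ((hx.1.2 k).1) ((hx.1.2 k).2)
    (fun hk => inf'_le _ (by simpa [slack] using hk)) (hle_μ k)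

theorem insr_nonneg {N Q : ℕ} {H : Fin Q → Fin Q → Fin N → ℝ} {Γ : Fin Q → ℝ} {q : Fin Q}
    {p : Fin Q → Fin N → ℝ} (hH : ∀ r k, 0 ≤ H r q k) (hΓ : 0 ≤ Γ q)
    (hp : ∀ r, r ≠ q → ∀ k, 0 ≤ p r k) (k : Fin N) : 0 ≤ insr H Γ q p k := by
  have hint : 0 ≤ ∑ r ∈ univ.erase q, H r q k * p r k :=
    sum_nonneg fun r hr => mul_nonneg (hH r k) (hp r (ne_of_mem_erase hr) k)
  unfold insr
  have := hH q k
  positivity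

theorem statement2_general {N Q : ℕ}
    (H : Fin Q → Fin Q → Fin N → ℝ) (Γ : Fin Q → ℝ) (pmax : Fin Q → Fin N → ℝ)
    (hH : ∀ r q k, 0 ≤ H r q k)
    (hΓ : ∀ q, 0 < Γ q)
    (hcap : ∀ q, 1 < (1 / (N : ℝ)) * ∑ k, pmax q k)
    (WF : Fin Q → (Fin Q → Fin N → ℝ) → Fin N → ℝ) (hWF : IsWF H Γ pmax WF)
    (q : Fin Q) (p : Fin Q → Fin N → ℝ)
    (hp : ∀ r, r ≠ q → p r ∈ stratSet (pmax r)) :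
    ∃ μ : ℝ, 0 < μ ∧
      (∀ k, WF q p k = min (pmax q k) (max 0 (μ - insr H Γ q p k))) ∧
      (1 / (N : ℝ)) * ∑ k, WF q p k = 1 := by
  have hproj := hWF q p hp
  have hinsr := insr_nonneg (fun r => hH r q) (hΓ q).le fun r hr k => ((hp r hr).2 k).1
  obtain ⟨μ, hμ, hclamp⟩ := hproj.exists_waterfilling (hcap q) hinsr
  exact ⟨μ, hμ, hclamp, hproj.1.1⟩

/-- The multiuser waterfilling solution is a clamped waterfilling formula
with a positive water level, and it saturates the power constraint. -/
theorem statement2 {N Q : ℕ} (hN : 1 ≤ N) (hQ : 2 ≤ Q)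
    (H : Fin Q → Fin Q → Fin N → ℝ) (Γ : Fin Q → ℝ) (pmax : Fin Q → Fin N → ℝ)
    (hH : ∀ r q k, 0 ≤ H r q k) (hHqq : ∀ q k, 0 < H q q k)
    (hΓ : ∀ q, 0 < Γ q) (hpmax : ∀ q k, 0 ≤ pmax q k)
    (hcap : ∀ q, 1 < (1 / (N : ℝ)) * ∑ k, pmax q k)
    (WF : Fin Q → (Fin Q → Fin N → ℝ) → Fin N → ℝ) (hWF : IsWF H Γ pmax WF)
    (q : Fin Q) (p : Fin Q → Fin N → ℝ)
    (hp : ∀ r, r ≠ q → p r ∈ stratSet (pmax r)) :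
    ∃ μ : ℝ, 0 < μ ∧
      (∀ k, WF q p k = min (pmax q k) (max 0 (μ - insr H Γ q p k))) ∧
      (1 / (N : ℝ)) * ∑ k, WF q p k = 1 :=
  statement2_general H Γ pmax hH hΓ hcap WF hWF q p hp
end
end

section
/- Let α_q ∈ [0,1) for each q and let w ∈ ℝ^Q with w_q > 0 for all q satisfy ‖H^max‖_{∞,mat}^w = max_q (1/w_q)·Σ_{r=1}^Q [H^max]_{qr}·w_r < 1. Define T : 𝒫^eff → 𝒫^eff blockwise by T_q(p) = α_q·p_q + (1−α_q)·Π_q(−insr_q(p_{-q})), where Π_q denotes the Euclidean projection onto 𝒫_q^eff. Then T is a block-contraction: for all p, p' ∈ 𝒫^eff, max_q ‖T_q(p) − T_q(p')‖₂/w_q ≤ β · max_q ‖p_q − p'_q‖₂/w_q, where β = max_q (α_q + (1−α_q)·(1/w_q)·Σ_{r=1}^Q [H^max]_{qr}·w_r) satisfies β ∈ [0,1). -/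
open Finset
open scoped Classical

noncomputable section

/-! The projection onto a convex set is firmly nonexpansive, so for the two best responses
`x, x'` of user `q` one has `‖x - x'‖² ≤ ⟪insr_q(p') - insr_q(p), x - x'⟫`. Both responses vanish
off `D_q`, and the powers of user `r` vanish off `D_r`, so on the carriers that matter each
interference coefficient `Γ_q |H_rq(k)|² / |H_qq(k)|²` is bounded by `[H^max]_{qr}`; Cauchy–Schwarz
then gives `‖x - x'‖ ≤ ∑_r [H^max]_{qr} ‖p_r - p'_r‖`. Averaging with `α_q` and passing to the
`w`-weighted block-maximum norm yields the modulus `β`, which is `< 1` because each `α_q < 1`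
and each row of `H^max` has weighted sum `< w_q`. -/

section Projection

variable {E : Type*} [NormedAddCommGroup E] [InnerProductSpace ℝ E] {K : Set E}

theorem inner_sub_le_zero_of_forall_norm_sub_le (hK : Convex ℝ K) {z x y : E} (hx : x ∈ K)
    (hmin : ∀ y ∈ K, ‖z - x‖ ≤ ‖z - y‖) (hy : y ∈ K) : inner ℝ (z - x) (y - x) ≤ 0 := by
  refine (norm_eq_iInf_iff_real_inner_le_zero hK hx).1 ?_ y hy
  have : Nonempty K := ⟨⟨x, hx⟩⟩
  exact le_antisymm (le_ciInf fun y => hmin y y.2)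
    (ciInf_le (f := fun y : K => ‖z - y‖) ⟨0, by rintro _ ⟨y, rfl⟩; positivity⟩ ⟨x, hx⟩)

theorem norm_sub_sq_le_inner_of_forall_norm_sub_le (hK : Convex ℝ K) {z z' x x' : E}
    (hx : x ∈ K) (hx' : x' ∈ K) (hmin : ∀ y ∈ K, ‖z - x‖ ≤ ‖z - y‖)
    (hmin' : ∀ y ∈ K, ‖z' - x'‖ ≤ ‖z' - y‖) :
    ‖x - x'‖ ^ 2 ≤ inner ℝ (z - z') (x - x') := by
  have h := inner_sub_le_zero_of_forall_norm_sub_le hK hx hmin hx'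
  have h' := inner_sub_le_zero_of_forall_norm_sub_le hK hx' hmin' hx
  rw [← real_inner_self_eq_norm_sq]
  simp only [inner_sub_left, inner_sub_right, real_inner_comm] at h h' ⊢
  linarith

end Projection

section Coordinates

variable {N : ℕ}

theorem sqrt_sum_sq_eq_norm (v : Fin N → ℝ) : √(∑ k, v k ^ 2) = ‖WithLp.toLp 2 v‖ := by
  simp [EuclideanSpace.norm_eq]

theorem dsq_eq_norm_sub_sq (x y : Fin N → ℝ) :
    dsq x y = ‖WithLp.toLp 2 y - WithLp.toLp 2 x‖ ^ 2 := by
  rw [EuclideanSpace.real_norm_sq_eq, dsq]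
  exact Finset.sum_congr rfl fun k _ => by simp only [PiLp.sub_apply]; ring

theorem IsProjOn.sum_sq_sub_le {S : Set (Fin N → ℝ)} (hS : Convex ℝ S)
    {z z' x x' : Fin N → ℝ} (hx : IsProjOn S z x) (hx' : IsProjOn S z' x') :
    ∑ k, (x k - x' k) ^ 2 ≤ ∑ k, (z k - z' k) * (x k - x' k) := by
  have hK : Convex ℝ (WithLp.ofLp ⁻¹' S : Set (EuclideanSpace ℝ (Fin N))) :=
    hS.linear_preimage (WithLp.linearEquiv 2 ℝ (Fin N → ℝ)).toLinearMap
  have hmin : ∀ {z x}, IsProjOn S z x →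
      ∀ y ∈ (WithLp.ofLp ⁻¹' S : Set (EuclideanSpace ℝ (Fin N))),
        ‖WithLp.toLp 2 z - WithLp.toLp 2 x‖ ≤ ‖WithLp.toLp 2 z - y‖ := by
    intro z x hx y hy
    have h := hx.2 y.ofLp hy
    rw [dsq_eq_norm_sub_sq, dsq_eq_norm_sub_sq] at h
    exact (pow_le_pow_iff_left₀ (norm_nonneg _) (norm_nonneg _) two_ne_zero).1 h
  have h := norm_sub_sq_le_inner_of_forall_norm_sub_le hK hx.1 hx'.1 (hmin hx) (hmin hx')
  rw [EuclideanSpace.real_norm_sq_eq] at h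
  simpa [PiLp.inner_apply, mul_comm] using h

theorem sqrt_sum_sq_convex_comb_sub_le (a a' b b' : Fin N → ℝ) {t : ℝ} (ht₀ : 0 ≤ t)
    (ht₁ : t ≤ 1) :
    √(∑ k, ((t * a k + (1 - t) * b k) - (t * a' k + (1 - t) * b' k)) ^ 2) ≤
      t * √(∑ k, (a k - a' k) ^ 2) + (1 - t) * √(∑ k, (b k - b' k) ^ 2) := by
  simp only [sqrt_sum_sq_eq_norm]
  have hsplit :
      WithLp.toLp 2 (fun k => (t * a k + (1 - t) * b k) - (t * a' k + (1 - t) * b' k)) =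
        t • WithLp.toLp 2 (fun k => a k - a' k) +
        (1 - t) • WithLp.toLp 2 (fun k => b k - b' k) := by
    ext k
    simp only [PiLp.add_apply, PiLp.smul_apply, smul_eq_mul]
    ring
  rw [hsplit, ← norm_smul_of_nonneg ht₀, ← norm_smul_of_nonneg (sub_nonneg.2 ht₁)]
  exact norm_add_le _ _

end Coordinates

section Interference

variable {N Q : ℕ} {H : Fin Q → Fin Q → Fin N → ℝ} {Γ : Fin Q → ℝ}
  {pmax : Fin Q → Fin N → ℝ} {WF : Fin Q → (Fin Q → Fin N → ℝ) → Fin N → ℝ}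

theorem effSet_convex (q : Fin Q) : Convex ℝ (effSet pmax WF q) := by
  rintro p ⟨⟨hsum, hbd⟩, hzero⟩ p' ⟨⟨hsum', hbd'⟩, hzero'⟩ a b ha hb hab
  refine ⟨⟨?_, fun k => ⟨?_, ?_⟩⟩, fun k hk => ?_⟩ <;>
    simp only [Pi.add_apply, Pi.smul_apply, smul_eq_mul]
  · rw [Finset.sum_add_distrib, ← Finset.mul_sum, ← Finset.mul_sum]
    linear_combination a * hsum + b * hsum' + hab
  · exact add_nonneg (mul_nonneg ha (hbd k).1) (mul_nonneg hb (hbd' k).1)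
  · calc a * p k + b * p' k ≤ a * pmax q k + b * pmax q k :=
          add_le_add (mul_le_mul_of_nonneg_left (hbd k).2 ha)
            (mul_le_mul_of_nonneg_left (hbd' k).2 hb)
      _ = pmax q k := by rw [← add_mul, hab, one_mul]
  · rw [hzero k hk, hzero' k hk]; ring

theorem le_maxRatio {q r : Fin Q} {k : Fin N} (hkq : k ∈ Dset pmax WF q)
    (hkr : k ∈ Dset pmax WF r) : H r q k / H q q k ≤ maxRatio H pmax WF q r :=
  le_csSup ((Set.finite_range fun k => H r q k / H q q k).subset
    (by rintro _ ⟨k, -, rfl⟩; exact ⟨k, rfl⟩)).bddAbove ⟨k, ⟨hkq, hkr⟩, rfl⟩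

theorem maxRatio_nonneg (hH : ∀ r q k, 0 ≤ H r q k) (hHqq : ∀ q k, 0 < H q q k)
    (q r : Fin Q) : 0 ≤ maxRatio H pmax WF q r :=
  Real.sSup_nonneg <| by rintro _ ⟨k, -, rfl⟩; exact div_nonneg (hH r q k) (hHqq q k).le

theorem Hmax_nonneg (hH : ∀ r q k, 0 ≤ H r q k) (hHqq : ∀ q k, 0 < H q q k)
    (hΓ : ∀ q, 0 < Γ q) (q r : Fin Q) : 0 ≤ Hmax H Γ pmax WF q r := by
  simp only [Hmax, Matrix.of_apply]
  split_ifs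
  exacts [le_rfl, mul_nonneg (hΓ q).le (maxRatio_nonneg hH hHqq q r)]

theorem mul_abs_sub_le_Hmax (hΓ : ∀ q, 0 < Γ q) {q r : Fin Q} (hqr : q ≠ r) {k : Fin N}
    (hkq : k ∈ Dset pmax WF q)
    {u u' : Fin N → ℝ} (hu : u ∈ effSet pmax WF r) (hu' : u' ∈ effSet pmax WF r) :
    Γ q * (H r q k / H q q k) * |u k - u' k| ≤ Hmax H Γ pmax WF q r * |u k - u' k| := by
  by_cases hkr : k ∈ Dset pmax WF r
  · refine mul_le_mul_of_nonneg_right ?_ (abs_nonneg _)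
    simp only [Hmax, Matrix.of_apply, if_neg hqr]
    exact mul_le_mul_of_nonneg_left (le_maxRatio hkq hkr) (hΓ q).le
  · simp [hu.2 k hkr, hu'.2 k hkr]

theorem insr_sub_insr (hHqq : ∀ q k, 0 < H q q k) (q : Fin Q) (p p' : Fin Q → Fin N → ℝ)
    (k : Fin N) :
    insr H Γ q p k - insr H Γ q p' k =
      ∑ r ∈ Finset.univ.erase q, Γ q * (H r q k / H q q k) * (p r k - p' r k) := by
  have h0 := (hHqq q k).ne'
  calc insr H Γ q p k - insr H Γ q p' k
      = Γ q / H q q k * (∑ r ∈ Finset.univ.erase q, H r q k * p r k -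
          ∑ r ∈ Finset.univ.erase q, H r q k * p' r k) := by
        simp only [insr]; field_simp; ring
    _ = _ := by
        rw [← Finset.sum_sub_distrib, Finset.mul_sum]
        exact Finset.sum_congr rfl fun r _ => by ring

theorem abs_insr_sub_le (hH : ∀ r q k, 0 ≤ H r q k) (hHqq : ∀ q k, 0 < H q q k)
    (hΓ : ∀ q, 0 < Γ q) {p p' : Fin Q → Fin N → ℝ} (hp : ∀ r, p r ∈ effSet pmax WF r)
    (hp' : ∀ r, p' r ∈ effSet pmax WF r) {q : Fin Q} {k : Fin N}
    (hkq : k ∈ Dset pmax WF q) :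
    |insr H Γ q p k - insr H Γ q p' k| ≤ ∑ r, Hmax H Γ pmax WF q r * |p r k - p' r k| := by
  rw [insr_sub_insr hHqq]
  calc _ ≤ ∑ r ∈ Finset.univ.erase q, |Γ q * (H r q k / H q q k) * (p r k - p' r k)| :=
        Finset.abs_sum_le_sum_abs _ _
    _ ≤ ∑ r ∈ Finset.univ.erase q, Hmax H Γ pmax WF q r * |p r k - p' r k| := by
        refine Finset.sum_le_sum fun r hr => ?_
        rw [abs_mul, abs_of_nonneg (mul_nonneg (hΓ q).le (div_nonneg (hH r q k) (hHqq q k).le))]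
        exact mul_abs_sub_le_Hmax hΓ (Finset.ne_of_mem_erase hr).symm hkq (hp r) (hp' r)
    _ ≤ _ := Finset.sum_le_sum_of_subset_of_nonneg (Finset.erase_subset _ _) fun r _ _ =>
        mul_nonneg (Hmax_nonneg hH hHqq hΓ q r) (abs_nonneg _)

end Interference

theorem le_mul_ciSup_div {ι : Type*} [Finite ι] {f w : ι → ℝ} (hw : ∀ i, 0 < w i) (i : ι) :
    f i ≤ w i * ⨆ j, f j / w j :=
  (div_le_iff₀' (hw i)).1 (le_ciSup (f := fun j => f j / w j) (Set.finite_range _).bddAbove i)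

section BlockContraction

variable {N Q : ℕ} {H : Fin Q → Fin Q → Fin N → ℝ} {Γ : Fin Q → ℝ}
  {pmax : Fin Q → Fin N → ℝ} {WF : Fin Q → (Fin Q → Fin N → ℝ) → Fin N → ℝ}

theorem sqrt_sum_sq_sub_le_of_isProjOn (hH : ∀ r q k, 0 ≤ H r q k)
    (hHqq : ∀ q k, 0 < H q q k) (hΓ : ∀ q, 0 < Γ q) {p p' : Fin Q → Fin N → ℝ}
    (hp : ∀ r, p r ∈ effSet pmax WF r) (hp' : ∀ r, p' r ∈ effSet pmax WF r) {q : Fin Q}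
    {x x' : Fin N → ℝ} (hx : IsProjOn (effSet pmax WF q) (fun k => -insr H Γ q p k) x)
    (hx' : IsProjOn (effSet pmax WF q) (fun k => -insr H Γ q p' k) x') :
    √(∑ k, (x k - x' k) ^ 2) ≤ ∑ r, Hmax H Γ pmax WF q r * √(∑ k, (p r k - p' r k) ^ 2) := by
  set U := √(∑ k, (x k - x' k) ^ 2)
  set C := ∑ r, Hmax H Γ pmax WF q r * √(∑ k, (p r k - p' r k) ^ 2)
  have hHmax := Hmax_nonneg (pmax := pmax) (WF := WF) hH hHqq hΓ q
  have hC : 0 ≤ C := Finset.sum_nonneg fun r _ => mul_nonneg (hHmax r) (Real.sqrt_nonneg _)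
  have hpoint : ∀ k, (-insr H Γ q p k - -insr H Γ q p' k) * (x k - x' k) ≤
      ∑ r, Hmax H Γ pmax WF q r * (|p r k - p' r k| * |x k - x' k|) := by
    intro k
    by_cases hkq : k ∈ Dset pmax WF q
    · calc _ ≤ |insr H Γ q p k - insr H Γ q p' k| * |x k - x' k| := by
            rw [neg_sub_neg, abs_sub_comm (insr H Γ q p k), ← abs_mul]
            exact le_abs_self _
        _ ≤ (∑ r, Hmax H Γ pmax WF q r * |p r k - p' r k|) * |x k - x' k| :=
            mul_le_mul_of_nonneg_right (abs_insr_sub_le hH hHqq hΓ hp hp' hkq) (abs_nonneg _)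
        _ = _ := by rw [Finset.sum_mul]; simp only [mul_assoc]
    · simp [hx.1.2 k hkq, hx'.1.2 k hkq]
  have hsq : U ^ 2 ≤ C * U :=
    calc U ^ 2 = ∑ k, (x k - x' k) ^ 2 :=
          Real.sq_sqrt (Finset.sum_nonneg fun _ _ => sq_nonneg _)
      _ ≤ ∑ k, (-insr H Γ q p k - -insr H Γ q p' k) * (x k - x' k) :=
          hx.sum_sq_sub_le (effSet_convex q) hx'
      _ ≤ ∑ k, ∑ r, Hmax H Γ pmax WF q r * (|p r k - p' r k| * |x k - x' k|) :=
          Finset.sum_le_sum fun k _ => hpoint k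
      _ = ∑ r, Hmax H Γ pmax WF q r * ∑ k, |p r k - p' r k| * |x k - x' k| := by
          rw [Finset.sum_comm]; simp only [Finset.mul_sum]
      _ ≤ ∑ r, Hmax H Γ pmax WF q r * (√(∑ k, (p r k - p' r k) ^ 2) * U) := by
          refine Finset.sum_le_sum fun r _ => mul_le_mul_of_nonneg_left ?_ (hHmax r)
          simpa only [sq_abs] using Real.sum_mul_le_sqrt_mul_sqrt Finset.univ
            (fun k => |p r k - p' r k|) (fun k => |x k - x' k|)
      _ = C * U := by rw [Finset.sum_mul]; simp only [mul_assoc]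
  nlinarith [Real.sqrt_nonneg (∑ k, (x k - x' k) ^ 2)]

theorem sqrt_sum_sq_smoothed_sub_le (hH : ∀ r q k, 0 ≤ H r q k)
    (hHqq : ∀ q k, 0 < H q q k) (hΓ : ∀ q, 0 < Γ q) {p p' : Fin Q → Fin N → ℝ}
    (hp : ∀ r, p r ∈ effSet pmax WF r) (hp' : ∀ r, p' r ∈ effSet pmax WF r) {q : Fin Q}
    {x x' : Fin N → ℝ} (hx : IsProjOn (effSet pmax WF q) (fun k => -insr H Γ q p k) x)
    (hx' : IsProjOn (effSet pmax WF q) (fun k => -insr H Γ q p' k) x') {t : ℝ}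
    (ht₀ : 0 ≤ t) (ht₁ : t ≤ 1) {w : Fin Q → ℝ} (hwq : w q ≠ 0) {M : ℝ}
    (hM : ∀ r, √(∑ k, (p r k - p' r k) ^ 2) ≤ w r * M) :
    √(∑ k, ((t * p q k + (1 - t) * x k) - (t * p' q k + (1 - t) * x' k)) ^ 2) ≤
      (t + (1 - t) * ((1 / w q) * ∑ r, Hmax H Γ pmax WF q r * w r)) * (w q * M) := by
  have hHmax := Hmax_nonneg (pmax := pmax) (WF := WF) hH hHqq hΓ q
  calc _ ≤ t * √(∑ k, (p q k - p' q k) ^ 2) + (1 - t) * √(∑ k, (x k - x' k) ^ 2) :=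
        sqrt_sum_sq_convex_comb_sub_le _ _ _ _ ht₀ ht₁
    _ ≤ t * (w q * M) + (1 - t) * ∑ r, Hmax H Γ pmax WF q r * (w r * M) := by
        gcongr with r
        · exact hM q
        · exact (sqrt_sum_sq_sub_le_of_isProjOn hH hHqq hΓ hp hp' hx hx').trans
            (Finset.sum_le_sum fun r _ => mul_le_mul_of_nonneg_left (hM r) (hHmax r))
    _ = _ := by
        have hsum : ∑ r, Hmax H Γ pmax WF q r * (w r * M) =
            (∑ r, Hmax H Γ pmax WF q r * w r) * M := by
          simp only [Finset.sum_mul, mul_assoc]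
        rw [hsum]
        field_simp

end BlockContraction

theorem statement16_general {N Q : ℕ} (hQ : 2 ≤ Q)
    (H : Fin Q → Fin Q → Fin N → ℝ) (Γ : Fin Q → ℝ) (pmax : Fin Q → Fin N → ℝ)
    (hH : ∀ r q k, 0 ≤ H r q k) (hHqq : ∀ q k, 0 < H q q k)
    (hΓ : ∀ q, 0 < Γ q)
    (WF : Fin Q → (Fin Q → Fin N → ℝ) → Fin N → ℝ)
    (α : Fin Q → ℝ) (hα : ∀ q, 0 ≤ α q ∧ α q < 1)
    (w : Fin Q → ℝ) (hw : ∀ q, 0 < w q)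
    (hnorm : sSup (Set.range fun q =>
      (1 / w q) * ∑ r, Hmax H Γ pmax WF q r * w r) < 1)
    (Proj : Fin Q → (Fin N → ℝ) → Fin N → ℝ)
    (hProj : ∀ q z, IsProjOn (effSet pmax WF q) z (Proj q z)) :
    ∃ β : ℝ,
      β = sSup (Set.range fun q => α q + (1 - α q) *
        ((1 / w q) * ∑ r, Hmax H Γ pmax WF q r * w r)) ∧
      0 ≤ β ∧ β < 1 ∧
      ∀ p p' : Fin Q → Fin N → ℝ,
        (∀ q, p q ∈ effSet pmax WF q) → (∀ q, p' q ∈ effSet pmax WF q) →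
        sSup (Set.range fun q =>
            Real.sqrt (∑ k,
              ((α q * p q k + (1 - α q) * Proj q (fun j => -insr H Γ q p j) k) -
               (α q * p' q k + (1 - α q) * Proj q (fun j => -insr H Γ q p' j) k)) ^ 2)
            / w q) ≤
          β * sSup (Set.range fun q =>
            Real.sqrt (∑ k, (p q k - p' q k) ^ 2) / w q) := by
  have q₀ : Fin Q := ⟨0, by omega⟩
  set S := fun q => (1 / w q) * ∑ r, Hmax H Γ pmax WF q r * w r
  have hS₀ (q : Fin Q) : 0 ≤ S q := mul_nonneg (one_div_nonneg.2 (hw q).le)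
    (Finset.sum_nonneg fun r _ => mul_nonneg (Hmax_nonneg hH hHqq hΓ q r) (hw r).le)
  have hS₁ (q : Fin Q) : S q < 1 := (le_ciSup (Set.finite_range S).bddAbove q).trans_lt hnorm
  set m := fun q => α q + (1 - α q) * S q
  have hm (q : Fin Q) : 0 ≤ m q ∧ m q < 1 :=
    ⟨add_nonneg (hα q).1 (mul_nonneg (sub_nonneg.2 (hα q).2.le) (hS₀ q)),
      by nlinarith [mul_pos (sub_pos.2 (hα q).2) (sub_pos.2 (hS₁ q))]⟩
  have hβ (q : Fin Q) : m q ≤ ⨆ q, m q := le_ciSup (Set.finite_range m).bddAbove q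
  have hβ₁ : ⨆ q, m q < 1 := by
    have : Nonempty (Fin Q) := ⟨q₀⟩
    obtain ⟨q, hq⟩ := exists_eq_ciSup_of_finite (f := m)
    exact hq ▸ (hm q).2
  refine ⟨_, rfl, (hm q₀).1.trans (hβ q₀), hβ₁, fun p p' hp hp' => ?_⟩
  set M := ⨆ q, √(∑ k, (p q k - p' q k) ^ 2) / w q
  have hM (r : Fin Q) : √(∑ k, (p r k - p' r k) ^ 2) ≤ w r * M :=
    le_mul_ciSup_div (f := fun q => √(∑ k, (p q k - p' q k) ^ 2)) hw r
  have hM₀ : 0 ≤ M := (mul_nonneg_iff_of_pos_left (hw q₀)).1 ((Real.sqrt_nonneg _).trans (hM q₀))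
  refine Real.iSup_le (fun q => ?_) (mul_nonneg ((hm q₀).1.trans (hβ q₀)) hM₀)
  rw [div_le_iff₀ (hw q)]
  calc _ ≤ m q * (w q * M) :=
        sqrt_sum_sq_smoothed_sub_le hH hHqq hΓ hp hp' (hProj q _) (hProj q _) (hα q).1
          (hα q).2.le (hw q).ne' hM
    _ ≤ (⨆ q, m q) * (w q * M) := mul_le_mul_of_nonneg_right (hβ q) (mul_nonneg (hw q).le hM₀)
    _ = (⨆ q, m q) * M * w q := by ring

/-- If the `w`-weighted maximum matrix norm of `H^max` is less than one,
then the smoothed multiuser waterfilling mapping (with projections onto the effective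
strategy sets) is a block-contraction of modulus `β` in the `w`-weighted block-maximum
norm. -/
theorem statement16 {N Q : ℕ} (hN : 1 ≤ N) (hQ : 2 ≤ Q)
    (H : Fin Q → Fin Q → Fin N → ℝ) (Γ : Fin Q → ℝ) (pmax : Fin Q → Fin N → ℝ)
    (hH : ∀ r q k, 0 ≤ H r q k) (hHqq : ∀ q k, 0 < H q q k)
    (hΓ : ∀ q, 0 < Γ q) (hpmax : ∀ q k, 0 ≤ pmax q k)
    (hcap : ∀ q, 1 < (1 / (N : ℝ)) * ∑ k, pmax q k)
    (WF : Fin Q → (Fin Q → Fin N → ℝ) → Fin N → ℝ) (hWF : IsWF H Γ pmax WF)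
    (α : Fin Q → ℝ) (hα : ∀ q, 0 ≤ α q ∧ α q < 1)
    (w : Fin Q → ℝ) (hw : ∀ q, 0 < w q)
    (hnorm : sSup (Set.range fun q =>
      (1 / w q) * ∑ r, Hmax H Γ pmax WF q r * w r) < 1)
    (Proj : Fin Q → (Fin N → ℝ) → Fin N → ℝ)
    (hProj : ∀ q z, IsProjOn (effSet pmax WF q) z (Proj q z)) :
    ∃ β : ℝ,
      β = sSup (Set.range fun q => α q + (1 - α q) *
        ((1 / w q) * ∑ r, Hmax H Γ pmax WF q r * w r)) ∧
      0 ≤ β ∧ β < 1 ∧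
      ∀ p p' : Fin Q → Fin N → ℝ,
        (∀ q, p q ∈ effSet pmax WF q) → (∀ q, p' q ∈ effSet pmax WF q) →
        sSup (Set.range fun q =>
            Real.sqrt (∑ k,
              ((α q * p q k + (1 - α q) * Proj q (fun j => -insr H Γ q p j) k) -
               (α q * p' q k + (1 - α q) * Proj q (fun j => -insr H Γ q p' j) k)) ^ 2)
            / w q) ≤
          β * sSup (Set.range fun q =>
            Real.sqrt (∑ k, (p q k - p' q k) ^ 2) / w q) :=
  statement16_general hQ H Γ pmax hH hHqq hΓ WF α hα w hw hnorm Proj hProj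
end
end

section
/- For p ∈ 𝒫, q ∈ {1,…,Q} and k ∈ {1,…,N}, define [D_q(p)]_k = (1/|H_qq(k)|² + p_q(k)/Γ_q + Σ_{r≠q} (|H_rq(k)|²/|H_qq(k)|²)·p_r(k))^{-2}, and set ε_q = min_{p ∈ 𝒫} (min_k [D_q(p)]_k / max_k [D_q(p)]_k) ∈ (0,1]. If for every q one has Σ_{r≠q} max_{k∈{1,…,N}} (|H_rq(k)|²/|H_qq(k)|²) < ε_q, then there exist β > 0 and δ ∈ [0,1) such that for every p ∈ 𝒫 and every q: max_k |1 − β·[D_q(p)]_k| + β·(max_k [D_q(p)]_k)·Σ_{r≠q} max_k (|H_rq(k)|²/|H_qq(k)|²) ≤ δ. -/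
open Finset
open scoped Classical

noncomputable section

/-- The diagonal entries of the matrix `D_q(p)`. -/
def Dqp {N Q : ℕ} (H : Fin Q → Fin Q → Fin N → ℝ) (Γ : Fin Q → ℝ)
    (q : Fin Q) (p : Fin Q → Fin N → ℝ) (k : Fin N) : ℝ :=
  ((1 / H q q k + p q k / Γ q +
    ∑ r ∈ Finset.univ.erase q, (H r q k / H q q k) * p r k) ^ 2)⁻¹

/-! The entries of `D_q(p)` are antitone in `p`, so on the strategy space they lie between their
values at the constant profile `N` and at `p = 0`, where they equal `H_qq(k)²`. A stepsize
`β ≤ min_{q,k} H_qq(k)⁻²` therefore gives `max_k |1 - β [D_q(p)]_k| = 1 - β m`, with `m` and `M`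
the minimum and maximum of `D_q(p)`. As `ε_q M ≤ m`, the left-hand side is at most
`1 - β M (ε_q - α_q)`, `α_q` being the crosstalk, and `M` is bounded below by the value at the
constant profile `N`, uniformly in `p`. -/

lemma Finite.exists_pos_forall_le {ι : Type*} [Finite ι] {f : ι → ℝ} (hf : ∀ i, 0 < f i) :
    ∃ c, 0 < c ∧ ∀ i, c ≤ f i := by
  cases isEmpty_or_nonempty ι
  · exact ⟨1, one_pos, isEmptyElim⟩
  · obtain ⟨i, hi⟩ := Finite.exists_min f
    exact ⟨f i, hf i, hi⟩

lemma ciSup_abs_one_sub_mul_le {ι : Type*} [Finite ι] [Nonempty ι] {d : ι → ℝ} {β : ℝ}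
    (hβ : 0 ≤ β) (hβd : ∀ i, β * d i ≤ 1) :
    ⨆ i, |1 - β * d i| ≤ 1 - β * ⨅ i, d i := by
  refine ciSup_le fun i => ?_
  have hmin : β * ⨅ i, d i ≤ β * d i :=
    mul_le_mul_of_nonneg_left (ciInf_le (Finite.bddBelow_range d) i) hβ
  rw [abs_of_nonneg (sub_nonneg.2 (hβd i))]
  linarith

section StrategySet

variable {N : ℕ} {pmax p : Fin N → ℝ}

lemma pos_of_mem_stratSet (h : p ∈ stratSet pmax) : 0 < N := by
  refine Nat.pos_of_ne_zero fun hN => ?_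
  have := h.1
  simp [hN] at this

lemma nonneg_of_mem_stratSet (h : p ∈ stratSet pmax) : 0 ≤ p := fun k => (h.2 k).1

lemma le_of_mem_stratSet (h : p ∈ stratSet pmax) (k : Fin N) : p k ≤ N := by
  have hsum : ∑ j, p j = N := by
    have h1 := h.1
    have hN : (N : ℝ) ≠ 0 := Nat.cast_ne_zero.2 (pos_of_mem_stratSet h).ne'
    field_simp at h1
    linarith
  exact hsum ▸ Finset.single_le_sum (fun j _ => (h.2 j).1) (Finset.mem_univ k)

end StrategySet

section Dqp

variable {N Q : ℕ} {H : Fin Q → Fin Q → Fin N → ℝ} {Γ : Fin Q → ℝ} {q : Fin Q}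
  {p p' : Fin Q → Fin N → ℝ} {k : Fin N}

lemma Dqp_nonneg : 0 ≤ Dqp H Γ q p k := inv_nonneg.2 (sq_nonneg _)

lemma Dqp_zero : Dqp H Γ q 0 k = H q q k ^ 2 := by
  simp [Dqp]

lemma Dqp_base_pos (hH : ∀ r, 0 ≤ H r q k) (hHqq : 0 < H q q k) (hΓ : 0 ≤ Γ q) (hp : 0 ≤ p) :
    0 < 1 / H q q k + p q k / Γ q + ∑ r ∈ univ.erase q, H r q k / H q q k * p r k := by
  have h2 : 0 ≤ p q k / Γ q := div_nonneg (hp q k) hΓ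
  have h3 : 0 ≤ ∑ r ∈ univ.erase q, H r q k / H q q k * p r k :=
    sum_nonneg fun r _ => mul_nonneg (div_nonneg (hH r) hHqq.le) (hp r k)
  have := one_div_pos.2 hHqq
  linarith

lemma Dqp_pos (hH : ∀ r, 0 ≤ H r q k) (hHqq : 0 < H q q k) (hΓ : 0 ≤ Γ q) (hp : 0 ≤ p) :
    0 < Dqp H Γ q p k :=
  inv_pos.2 (pow_pos (Dqp_base_pos hH hHqq hΓ hp) 2)

lemma Dqp_anti (hH : ∀ r, 0 ≤ H r q k) (hHqq : 0 < H q q k) (hΓ : 0 ≤ Γ q) (hp : 0 ≤ p)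
    (hpp' : p ≤ p') : Dqp H Γ q p' k ≤ Dqp H Γ q p k := by
  have hbase := Dqp_base_pos hH hHqq hΓ hp
  unfold Dqp
  gcongr with r
  · exact hpp' q k
  · exact div_nonneg (hH r) hHqq.le
  · exact hpp' r k

end Dqp

def crosstalk {N Q : ℕ} (H : Fin Q → Fin Q → Fin N → ℝ) (q : Fin Q) : ℝ :=
  ∑ r ∈ Finset.univ.erase q, sSup (Set.range fun k => H r q k / H q q k)

/-- The constant `ε_q`. -/
def flatness {N Q : ℕ} (H : Fin Q → Fin Q → Fin N → ℝ) (Γ : Fin Q → ℝ)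
    (pmax : Fin Q → Fin N → ℝ) (q : Fin Q) : ℝ :=
  sInf {x : ℝ | ∃ p : Fin Q → Fin N → ℝ,
    (∀ q', p q' ∈ stratSet (pmax q')) ∧
    x = sInf (Set.range fun k => Dqp H Γ q p k) / sSup (Set.range fun k => Dqp H Γ q p k)}

lemma flatness_mul_le {N Q : ℕ} {H : Fin Q → Fin Q → Fin N → ℝ} {Γ : Fin Q → ℝ}
    {pmax : Fin Q → Fin N → ℝ} {p : Fin Q → Fin N → ℝ} (hp : ∀ q', p q' ∈ stratSet (pmax q'))
    (q : Fin Q) :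
    flatness H Γ pmax q * ⨆ k, Dqp H Γ q p k ≤ ⨅ k, Dqp H Γ q p k := by
  have hD : ∀ p' k, 0 ≤ Dqp H Γ q p' k := fun _ _ => Dqp_nonneg
  have hε : flatness H Γ pmax q ≤ (⨅ k, Dqp H Γ q p k) / ⨆ k, Dqp H Γ q p k := by
    refine csInf_le ⟨0, ?_⟩ ⟨p, hp, rfl⟩
    rintro _ ⟨p', -, rfl⟩
    exact div_nonneg (Real.iInf_nonneg (hD p')) (Real.iSup_nonneg (hD p'))
  rcases (Real.iSup_nonneg (hD p)).eq_or_lt with h0 | hpos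
  · rw [← h0, mul_zero]
    exact Real.iInf_nonneg (hD p)
  · exact (le_div_iff₀ hpos).1 hε

lemma add_mul_ciSup_le_of_flat {ι : Type*} [Finite ι] [Nonempty ι] {d : ι → ℝ}
    {β ε α L c : ℝ} (hβ : 0 ≤ β) (hβd : ∀ i, β * d i ≤ 1) (hL0 : 0 ≤ L) (hL : ∀ i, L ≤ d i)
    (hε : ε * ⨆ i, d i ≤ ⨅ i, d i) (hc : 0 ≤ c) (hcεα : c ≤ ε - α) :
    (⨆ i, |1 - β * d i|) + β * (⨆ i, d i) * α ≤ 1 - β * (L * c) := by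
  obtain ⟨i⟩ := ‹Nonempty ι›
  have hLM : L ≤ ⨆ i, d i := (hL i).trans (le_ciSup (Finite.bddAbove_range d) i)
  have hβε := mul_le_mul_of_nonneg_left hε hβ
  have hLc : L * c ≤ (⨆ i, d i) * (ε - α) := mul_le_mul hLM hcεα hc (hL0.trans hLM)
  calc (⨆ i, |1 - β * d i|) + β * (⨆ i, d i) * α
      ≤ 1 - β * (⨅ i, d i) + β * (⨆ i, d i) * α := by
        gcongr; exact ciSup_abs_one_sub_mul_le hβ hβd
    _ ≤ 1 - β * ((⨆ i, d i) * (ε - α)) := by linarith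
    _ ≤ 1 - β * (L * c) := by gcongr

theorem statement19_general {N Q : ℕ}
    (H : Fin Q → Fin Q → Fin N → ℝ) (Γ : Fin Q → ℝ) (pmax : Fin Q → Fin N → ℝ)
    (hH : ∀ r q k, 0 ≤ H r q k) (hHqq : ∀ q k, 0 < H q q k)
    (hΓ : ∀ q, 0 < Γ q)
    (hsmall : ∀ q : Fin Q,
      ∑ r ∈ Finset.univ.erase q, sSup (Set.range fun k => H r q k / H q q k) <
        sInf {x : ℝ | ∃ p : Fin Q → Fin N → ℝ,
          (∀ q', p q' ∈ stratSet (pmax q')) ∧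
          x = sInf (Set.range fun k => Dqp H Γ q p k) /
              sSup (Set.range fun k => Dqp H Γ q p k)}) :
    ∃ β δ : ℝ, 0 < β ∧ 0 ≤ δ ∧ δ < 1 ∧
      ∀ p : Fin Q → Fin N → ℝ, (∀ q', p q' ∈ stratSet (pmax q')) →
        ∀ q, sSup (Set.range fun k => |1 - β * Dqp H Γ q p k|) +
          β * sSup (Set.range fun k => Dqp H Γ q p k) *
            ∑ r ∈ Finset.univ.erase q, sSup (Set.range fun k => H r q k / H q q k)
          ≤ δ := by
  let pN : Fin Q → Fin N → ℝ := fun _ _ => N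
  obtain ⟨β, hβ, hβH⟩ := Finite.exists_pos_forall_le fun qk : Fin Q × Fin N =>
    inv_pos.2 (pow_pos (hHqq qk.1 qk.2) 2)
  obtain ⟨L, hL, hLD⟩ := Finite.exists_pos_forall_le fun qk : Fin Q × Fin N =>
    Dqp_pos (p := pN) (fun r => hH r qk.1 qk.2) (hHqq qk.1 qk.2) (hΓ qk.1).le
      fun _ _ => Nat.cast_nonneg N
  obtain ⟨c, hc, hcε⟩ := Finite.exists_pos_forall_le fun q =>
    sub_pos.2 (show crosstalk H q < flatness H Γ pmax q from hsmall q)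
  refine ⟨β, max (1 - β * (L * c)) 0, hβ, le_max_right _ _,
    max_lt (sub_lt_self 1 (by positivity)) one_pos, fun p hp q => ?_⟩
  have : Nonempty (Fin N) := ⟨⟨0, pos_of_mem_stratSet (hp q)⟩⟩
  have hp0 : 0 ≤ p := fun r => nonneg_of_mem_stratSet (hp r)
  have hpN : p ≤ pN := fun r => le_of_mem_stratSet (hp r)
  have hDL : ∀ k, L ≤ Dqp H Γ q p k := fun k =>
    (hLD (q, k)).trans (Dqp_anti (fun r => hH r q k) (hHqq q k) (hΓ q).le hp0 hpN)
  have hDH : ∀ k, Dqp H Γ q p k ≤ H q q k ^ 2 := fun k => by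
    simpa only [Dqp_zero] using Dqp_anti (fun r => hH r q k) (hHqq q k) (hΓ q).le le_rfl hp0
  refine le_max_of_le_left (add_mul_ciSup_le_of_flat hβ.le (fun k => ?_) hL.le
    hDL (flatness_mul_le hp q) hc.le (hcε q))
  calc β * Dqp H Γ q p k ≤ (H q q k ^ 2)⁻¹ * H q q k ^ 2 :=
        mul_le_mul (hβH (q, k)) (hDH k) Dqp_nonneg (by positivity)
    _ = 1 := inv_mul_cancel₀ (pow_pos (hHqq q k) 2).ne'

/-- If the total normalized crosstalk of every user is below `ε_q`, then
there are a stepsize `β > 0` and a modulus `δ ∈ [0,1)` making the gradient projection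
contraction estimate hold uniformly on the strategy space. -/
theorem statement19 {N Q : ℕ} (hN : 1 ≤ N) (hQ : 2 ≤ Q)
    (H : Fin Q → Fin Q → Fin N → ℝ) (Γ : Fin Q → ℝ) (pmax : Fin Q → Fin N → ℝ)
    (hH : ∀ r q k, 0 ≤ H r q k) (hHqq : ∀ q k, 0 < H q q k)
    (hΓ : ∀ q, 0 < Γ q) (hpmax : ∀ q k, 0 ≤ pmax q k)
    (hcap : ∀ q, 1 < (1 / (N : ℝ)) * ∑ k, pmax q k)
    (hsmall : ∀ q : Fin Q,
      ∑ r ∈ Finset.univ.erase q, sSup (Set.range fun k => H r q k / H q q k) <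
        sInf {x : ℝ | ∃ p : Fin Q → Fin N → ℝ,
          (∀ q', p q' ∈ stratSet (pmax q')) ∧
          x = sInf (Set.range fun k => Dqp H Γ q p k) /
              sSup (Set.range fun k => Dqp H Γ q p k)}) :
    ∃ β δ : ℝ, 0 < β ∧ 0 ≤ δ ∧ δ < 1 ∧
      ∀ p : Fin Q → Fin N → ℝ, (∀ q', p q' ∈ stratSet (pmax q')) →
        ∀ q, sSup (Set.range fun k => |1 - β * Dqp H Γ q p k|) +
          β * sSup (Set.range fun k => Dqp H Γ q p k) *
            ∑ r ∈ Finset.univ.erase q, sSup (Set.range fun k => H r q k / H q q k)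
          ≤ δ :=
  statement19_general H Γ pmax hH hHqq hΓ hsmall
end
end
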